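/- arXiv:2006.15703 — 2 statements merged into one kernel-verified Lean document; each statement's English description precedes it below -/
import Mathlib

section
/- If C is a φ-shiftable chain for a proper partial (Δ+1)-edge-coloring φ, then the reverse chain C* is Shift(φ,C)-shiftable and Shift(Shift(φ,C),C*) = φ. -/
open SimpleGraph

variable {V : Type*} [DecidableEq V]

/-- Two edges (as unordered pairs of vertices) are adjacent: distinct and sharing an endpoint. -/
def EdgeAdj (e f : Sym2 V) : Prop := e ≠ f ∧ ∃ v, v ∈ e ∧ v ∈ f

/-- A proper partial edge-coloring of `G` with colors `{1,…,Δ+1}` (as `Fin (Δ+1)`):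
its domain consists of edges of `G`, and adjacent colored edges get distinct colors. -/
def IsProperPartial (G : SimpleGraph V) (Δ : ℕ)
    (φ : Sym2 V → Option (Fin (Δ + 1))) : Prop :=
  (∀ e, (φ e).isSome → e ∈ G.edgeSet) ∧
  ∀ e f, EdgeAdj e f → (φ e).isSome → φ e ≠ φ f

/-- The set `M(φ,x)` of colors missing at `x`. -/
def missingColors (G : SimpleGraph V) (Δ : ℕ)
    (φ : Sym2 V → Option (Fin (Δ + 1))) (x : V) : Set (Fin (Δ + 1)) :=
  {c | ∀ y, G.Adj x y → φ s(x, y) ≠ some c}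

/-- `Shift φ e₀ e₁`: move the color of `e₁` to `e₀`, uncolor `e₁`, keep all else. -/
def Shift {α : Type*} (φ : Sym2 V → Option α) (e₀ e₁ : Sym2 V) :
    Sym2 V → Option α :=
  fun e => if e = e₀ then φ e₁ else if e = e₁ then none else φ e

/-- `(e₀, e₁)` is a `φ`-shiftable pair. -/
def ShiftablePair (G : SimpleGraph V) (Δ : ℕ) (φ : Sym2 V → Option (Fin (Δ + 1)))
    (e₀ e₁ : Sym2 V) : Prop :=
  EdgeAdj e₀ e₁ ∧ e₀ ∈ G.edgeSet ∧ φ e₀ = none ∧ (φ e₁).isSome ∧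
    IsProperPartial G Δ (Shift φ e₀ e₁)

/-- Shifting a coloring along a chain (list of edges). -/
def ShiftChain {α : Type*} : List (Sym2 V) → (Sym2 V → Option α) → (Sym2 V → Option α)
  | [], φ => φ
  | [_], φ => φ
  | e₀ :: e₁ :: rest, φ => ShiftChain (e₁ :: rest) (Shift φ e₀ e₁)

/-- A chain is `φ`-shiftable: each consecutive pair is shiftable w.r.t. the current coloring
(for a single-edge chain we require the edge to be an uncolored edge of `G`). -/
def ChainShiftable (G : SimpleGraph V) (Δ : ℕ) :
    List (Sym2 V) → (Sym2 V → Option (Fin (Δ + 1))) → Prop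
  | [], _ => True
  | [e], φ => φ e = none ∧ e ∈ G.edgeSet
  | e₀ :: e₁ :: rest, φ =>
      ShiftablePair G Δ φ e₀ e₁ ∧ ChainShiftable G Δ (e₁ :: rest) (Shift φ e₀ e₁)

/-- The spanning subgraph `G(φ, αβ)` of edges colored `α` or `β`. -/
def abSub (G : SimpleGraph V) (Δ : ℕ) (φ : Sym2 V → Option (Fin (Δ + 1)))
    (α β : Fin (Δ + 1)) : SimpleGraph V where
  Adj x y := G.Adj x y ∧ (φ s(x, y) = some α ∨ φ s(x, y) = some β)
  symm := by
    constructor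
    intro x y h
    refine ⟨h.1.symm, ?_⟩
    rw [Sym2.eq_swap]
    exact h.2
  loopless := ⟨fun x h => G.loopless.irrefl x h.1⟩

/-- A chain is `φ`-happy: it is `φ`-shiftable and its last edge is happy after shifting. -/
def ChainHappy (G : SimpleGraph V) (Δ : ℕ) (C : List (Sym2 V))
    (φ : Sym2 V → Option (Fin (Δ + 1))) : Prop :=
  ChainShiftable G Δ C φ ∧
    ∃ x y : V, C.getLast? = some s(x, y) ∧
      (missingColors G Δ (ShiftChain C φ) x ∩ missingColors G Δ (ShiftChain C φ) y).Nonempty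

/-
If `C = (e₀, e₁, …)` is shiftable, then by induction the reverse of its tail undoes the shift
along the tail and returns to `Shift φ e₀ e₁`; appending the single pair `(e₁, e₀)` then undoes
the first shift, and that pair is shiftable because the coloring it produces is `φ` itself.
-/

omit [DecidableEq V] in
theorem EdgeAdj.symm {e f : Sym2 V} (h : EdgeAdj e f) : EdgeAdj f e :=
  ⟨h.1.symm, h.2.imp fun _ hv => ⟨hv.2, hv.1⟩⟩

section Shift

variable {α : Type*}

theorem shift_apply_left (φ : Sym2 V → Option α) (e₀ e₁ : Sym2 V) :
    Shift φ e₀ e₁ e₀ = φ e₁ :=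
  if_pos rfl

theorem shift_apply_right (φ : Sym2 V → Option α) {e₀ e₁ : Sym2 V} (h : e₀ ≠ e₁) :
    Shift φ e₀ e₁ e₁ = none := by
  simp [Shift, h.symm]

theorem shift_shift_swap_of_eq_none (φ : Sym2 V → Option α) {e₀ e₁ : Sym2 V}
    (hne : e₀ ≠ e₁) (h₀ : φ e₀ = none) :
    Shift (Shift φ e₀ e₁) e₁ e₀ = φ := by
  funext e
  by_cases h₁ : e = e₁
  · subst h₁; simp [Shift]
  · by_cases h₂ : e = e₀
    · subst h₂; simp [Shift, hne, h₀]
    · simp [Shift, h₁, h₂]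

theorem shiftChain_append_pair (L : List (Sym2 V)) (ψ : Sym2 V → Option α) (a e : Sym2 V) :
    ShiftChain (L ++ [a, e]) ψ = Shift (ShiftChain (L ++ [a]) ψ) a e := by
  induction L generalizing ψ with
  | nil => rfl
  | cons b L ih =>
    cases L with
    | nil => rfl
    | cons c L => exact ih _

end Shift

theorem ShiftablePair.swap {G : SimpleGraph V} {Δ : ℕ} {φ : Sym2 V → Option (Fin (Δ + 1))}
    {e₀ e₁ : Sym2 V} (h : ShiftablePair G Δ φ e₀ e₁) (hφ : IsProperPartial G Δ φ) :
    ShiftablePair G Δ (Shift φ e₀ e₁) e₁ e₀ := by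
  obtain ⟨hadj, -, h₀, h₁, -⟩ := h
  refine ⟨hadj.symm, hφ.1 e₁ h₁, shift_apply_right φ hadj.1, ?_, ?_⟩
  · rwa [shift_apply_left]
  · rwa [shift_shift_swap_of_eq_none φ hadj.1 h₀]

theorem ChainShiftable.append_pair {G : SimpleGraph V} {Δ : ℕ} {L : List (Sym2 V)}
    {ψ : Sym2 V → Option (Fin (Δ + 1))} {a e : Sym2 V}
    (hL : ChainShiftable G Δ (L ++ [a]) ψ)
    (hpair : ShiftablePair G Δ (ShiftChain (L ++ [a]) ψ) a e) (he : e ∈ G.edgeSet) :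
    ChainShiftable G Δ (L ++ [a, e]) ψ := by
  induction L generalizing ψ with
  | nil => exact ⟨hpair, shift_apply_right ψ hpair.1.1, he⟩
  | cons b L ih => cases L <;> exact ⟨hL.1, ih hL.2 hpair⟩

theorem shiftChain_reversible_general (G : SimpleGraph V) (Δ : ℕ)
    (φ : Sym2 V → Option (Fin (Δ + 1))) (hφ : IsProperPartial G Δ φ)
    (C : List (Sym2 V)) (hC : ChainShiftable G Δ C φ) :
    ChainShiftable G Δ C.reverse (ShiftChain C φ) ∧
      ShiftChain C.reverse (ShiftChain C φ) = φ := by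
  induction C generalizing φ with
  | nil => exact ⟨trivial, rfl⟩
  | cons e₀ rest ih =>
    cases rest with
    | nil => exact ⟨hC, rfl⟩
    | cons e₁ rest =>
      obtain ⟨hpair, hC'⟩ := hC
      have htail := ih _ hpair.2.2.2.2 hC'
      rw [List.reverse_cons] at htail
      obtain ⟨hshiftable, hback⟩ := htail
      have hrev : (e₀ :: e₁ :: rest).reverse = rest.reverse ++ [e₁, e₀] := by simp
      rw [ShiftChain.eq_3, hrev, shiftChain_append_pair, hback]
      refine ⟨hshiftable.append_pair ?_ hpair.2.1, ?_⟩
      · rw [hback]; exact hpair.swap hφ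
      · exact shift_shift_swap_of_eq_none φ hpair.1.1 hpair.2.2.1

/-- if `C` is a `φ`-shiftable chain then its reverse `C*` is
`Shift(φ,C)`-shiftable, and shifting along `C*` recovers `φ`. -/
theorem shiftChain_reversible [Fintype V] (G : SimpleGraph V) (Δ : ℕ)
    (φ : Sym2 V → Option (Fin (Δ + 1))) (hφ : IsProperPartial G Δ φ)
    (C : List (Sym2 V)) (hchain : C.Chain' EdgeAdj) (hC : ChainShiftable G Δ C φ) :
    ChainShiftable G Δ C.reverse (ShiftChain C φ) ∧
      ShiftChain C.reverse (ShiftChain C φ) = φ :=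
  shiftChain_reversible_general G Δ φ hφ C hC
end

section
/- If C is a φ-happy chain (i.e., C is φ-shiftable and the last edge of C is Shift(φ,C)-happy), then the connected subgraph H(C) of G with vertex set V(C) and edge set E(C) is augmenting for φ: there exists a proper partial coloring ψ with domain dom(φ) ∪ E(C) that agrees with φ outside E(C). -/
open SimpleGraph

variable {V : Type*} [DecidableEq V]

/-
Shifting along a shiftable chain keeps the coloring proper and moves the uncolored
edge from the first edge of the chain to its last edge `xy`; the colored domain becomes
`dom φ ∪ E(C)` minus `xy`. Since `xy` is happy after the shift, some color is missing at both
`x` and `y`, and giving `xy` that color keeps the coloring proper.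
-/

variable {G : SimpleGraph V} {Δ : ℕ}

lemma shiftChain_apply_of_not_mem {α : Type*} :
    ∀ {C : List (Sym2 V)} (φ : Sym2 V → Option α) {f : Sym2 V}, f ∉ C →
      ShiftChain C φ f = φ f
  | [], _, _, _ | [_], _, _, _ => rfl
  | e₀ :: e₁ :: rest, φ, f, hf => by
      simp only [List.mem_cons, not_or] at hf
      rw [ShiftChain, shiftChain_apply_of_not_mem _ (by simpa using hf.2), Shift,
        if_neg hf.1, if_neg hf.2.1]

namespace IsProperPartial

variable {φ : Sym2 V → Option (Fin (Δ + 1))}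

omit [DecidableEq V] in
lemma apply_ne_of_mem_missingColors (hφ : IsProperPartial G Δ φ) {v : V} {c : Fin (Δ + 1)}
    (hc : c ∈ missingColors G Δ φ v) {f : Sym2 V} (hv : v ∈ f) : φ f ≠ some c := by
  intro hf
  obtain ⟨w, rfl⟩ := Sym2.mem_iff_exists.mp hv
  exact hc w (hφ.1 s(v, w) (by rw [hf]; rfl)) hf

lemma update_of_mem_missingColors (hφ : IsProperPartial G Δ φ) {x y : V} {c : Fin (Δ + 1)}
    (hxy : G.Adj x y) (hx : c ∈ missingColors G Δ φ x) (hy : c ∈ missingColors G Δ φ y) :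
    IsProperPartial G Δ (Function.update φ s(x, y) (some c)) := by
  have hfree : ∀ f, EdgeAdj s(x, y) f → φ f ≠ some c := by
    rintro f ⟨-, v, hvxy, hvf⟩
    rcases Sym2.mem_iff.mp hvxy with rfl | rfl
    exacts [hφ.apply_ne_of_mem_missingColors hx hvf, hφ.apply_ne_of_mem_missingColors hy hvf]
  refine ⟨fun e he => ?_, fun e f hef he => ?_⟩
  · rcases eq_or_ne e s(x, y) with rfl | hne
    · exact hxy
    · exact hφ.1 e (by simpa [hne] using he)
  · rcases eq_or_ne e s(x, y) with rfl | hne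
    · rw [Function.update_self, Function.update_of_ne hef.1.symm]
      exact (hfree f hef).symm
    rcases eq_or_ne f s(x, y) with rfl | hfne
    · rw [Function.update_self, Function.update_of_ne hne]
      exact hfree e ⟨hef.1.symm, hef.2.imp fun _ hv => hv.symm⟩
    rw [Function.update_of_ne hne] at he ⊢
    rw [Function.update_of_ne hfne]
    exact hφ.2 e f hef he

end IsProperPartial

namespace ChainShiftable

lemma isProperPartial_shiftChain :
    ∀ {C : List (Sym2 V)} {φ : Sym2 V → Option (Fin (Δ + 1))},
      ChainShiftable G Δ C φ → IsProperPartial G Δ φ → IsProperPartial G Δ (ShiftChain C φ)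
  | [], _, _, hφ | [_], _, _, hφ => hφ
  | _ :: _ :: _, _, hs, _ => by
      rw [ShiftChain]
      exact isProperPartial_shiftChain hs.2 hs.1.2.2.2.2

lemma getLast_mem_edgeSet :
    ∀ {C : List (Sym2 V)} {φ : Sym2 V → Option (Fin (Δ + 1))} {L : Sym2 V},
      ChainShiftable G Δ C φ → C.getLast? = some L → L ∈ G.edgeSet
  | [], _, _, _, hL => by simp at hL
  | [_], _, _, hs, hL => by
      obtain rfl := Option.some.inj hL
      exact hs.2
  | _ :: _ :: _, _, _, hs, hL => getLast_mem_edgeSet hs.2 (by simpa using hL)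

lemma isSome_shiftChain_iff :
    ∀ {C : List (Sym2 V)} {φ : Sym2 V → Option (Fin (Δ + 1))} {L : Sym2 V},
      ChainShiftable G Δ C φ → C.getLast? = some L → ∀ f,
        (ShiftChain C φ f).isSome ↔ ((φ f).isSome ∨ f ∈ C) ∧ f ≠ L
  | [], _, _, _, hL, _ => by simp at hL
  | [e], φ, _, hs, hL, f => by
      obtain rfl := Option.some.inj hL
      rcases eq_or_ne f e with rfl | hf
      · simp [ShiftChain, hs.1]
      · simp [ShiftChain, hf]
  | e₀ :: e₁ :: rest, φ, L, hs, hL, f => by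
      obtain ⟨⟨hne, -⟩, -, -, he₁, -⟩ := hs.1
      rw [ShiftChain, isSome_shiftChain_iff hs.2 (by simpa using hL)]
      -- the shift uncolors `e₁`, but `e₁` stays in the chain
      by_cases h₀ : f = e₀ <;> by_cases h₁ : f = e₁ <;>
        simp_all [Shift, Ne.symm hne]

end ChainShiftable

theorem happy_chain_augmenting_general (G : SimpleGraph V) (Δ : ℕ)
    (φ : Sym2 V → Option (Fin (Δ + 1))) (hφ : IsProperPartial G Δ φ)
    (C : List (Sym2 V)) (hhappy : ChainHappy G Δ C φ) :
    ∃ ψ : Sym2 V → Option (Fin (Δ + 1)), IsProperPartial G Δ ψ ∧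
      (∀ f, (ψ f).isSome ↔ ((φ f).isSome ∨ f ∈ C)) ∧
      ∀ f ∉ C, ψ f = φ f := by
  obtain ⟨hs, x, y, hL, c, hcx, hcy⟩ := hhappy
  have hxyC : s(x, y) ∈ C := List.mem_of_getLast? hL
  refine ⟨Function.update (ShiftChain C φ) s(x, y) (some c), ?_, fun f => ?_, fun f hf => ?_⟩
  · exact (hs.isProperPartial_shiftChain hφ).update_of_mem_missingColors
      (hs.getLast_mem_edgeSet hL) hcx hcy
  · rcases eq_or_ne f s(x, y) with rfl | hf
    · simp [hxyC]
    · simp [hs.isSome_shiftChain_iff hL, hf]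
  · have hf' : f ≠ s(x, y) := fun h => hf (h ▸ hxyC)
    rw [Function.update_of_ne hf', shiftChain_apply_of_not_mem φ hf]

/-- a `φ`-happy chain gives an augmenting subgraph: there is a proper
partial coloring `ψ` with domain `dom(φ) ∪ E(C)` agreeing with `φ` outside `E(C)`. -/
theorem happy_chain_augmenting [Fintype V] (G : SimpleGraph V) (Δ : ℕ)
    (φ : Sym2 V → Option (Fin (Δ + 1))) (hφ : IsProperPartial G Δ φ)
    (C : List (Sym2 V)) (hchain : C.Chain' EdgeAdj) (hhappy : ChainHappy G Δ C φ) :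
    ∃ ψ : Sym2 V → Option (Fin (Δ + 1)), IsProperPartial G Δ ψ ∧
      (∀ f, (ψ f).isSome ↔ ((φ f).isSome ∨ f ∈ C)) ∧
      ∀ f ∉ C, ψ f = φ f :=
  happy_chain_augmenting_general G Δ φ hφ C hhappy
end
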